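/- Let f : 𝔻 → 𝔻 be a holomorphic function and let σ ∈ ∂𝔻. Assume f has finite angular derivative at σ and the non-tangential limit f(σ) lies in ∂𝔻. Then ∠lim_{ζ→σ} Ω^𝔻_σ(ζ)/Ω^𝔻_{f(σ)}(f(ζ)) = |f'(σ)|, where for τ ∈ ∂𝔻 the Poisson kernel of the disc is Ω^𝔻_τ(ζ) = −(1−|ζ|²)/|τ−ζ|². -/

import Mathlib

/-!
Since `‖τ‖ = 1`, `1 - ‖F‖ ^ 2 = 2 Re (τ̄ (τ - F)) - ‖τ - F‖ ^ 2`, so the angular derivative `d`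
gives the first-order expansion `1 - ‖f ζ‖ ^ 2 = 2 Re (τ̄ d (σ - ζ)) + o(‖σ - ζ‖)` in every Stolz
region, and in the same way `1 - ‖ζ‖ ^ 2 = 2 Re (σ̄ (σ - ζ)) + o(‖σ - ζ‖)`.

The Schwarz lemma, applied to `f` followed by a disc automorphism sending `f 0` to `0`, gives
`κ (1 - ‖ζ‖ ^ 2) ≤ 1 - ‖f ζ‖ ^ 2` with `κ > 0`. Along the rays `ζ = σ (1 - t v)`, `Re v > 0`,
which stay in a Stolz region, this forces `Re ((τ̄ σ d - κ) v) ≥ 0` for every `v` in the right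
half-plane, hence `τ̄ σ d` is real and `≥ κ`, i.e. `τ̄ σ d = ‖d‖ > 0`. Then the two first-order
terms are proportional, and since `‖σ - ζ‖ ≤ M (1 - ‖ζ‖ ^ 2)` in the Stolz region of aperture `M`,
`(1 - ‖f ζ‖ ^ 2) / (1 - ‖ζ‖ ^ 2) → ‖d‖`. The quotient of Poisson kernels is
`‖(τ - f ζ) / (σ - ζ)‖ ^ 2 (1 - ‖ζ‖ ^ 2) / (1 - ‖f ζ‖ ^ 2)`, which tends to `‖d‖ ^ 2 / ‖d‖`.
-/

open Filter Topology Metric Set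

noncomputable section

/-- `ℂⁿ` as a complex Euclidean space. -/
abbrev En (n : ℕ) := EuclideanSpace ℂ (Fin n)

/-- The open unit disc in `ℂ`. -/
def unitDisc : Set ℂ := Metric.ball 0 1

/-- The Poincaré distance on the unit disc, normalized as
`ρ(ζ₁,ζ₂) = log((1+m)/(1−m))` with `m = |ζ₁−ζ₂|/|1−conj(ζ₂)ζ₁|`. -/
def poincareDist (ζ₁ ζ₂ : ℂ) : ℝ :=
  Real.log ((1 + ‖ζ₁ - ζ₂‖ / ‖1 - (starRingEnd ℂ) ζ₂ * ζ₁‖) /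
    (1 - ‖ζ₁ - ζ₂‖ / ‖1 - (starRingEnd ℂ) ζ₂ * ζ₁‖))

/-- The (one-disc) Kobayashi distance of a (convex) domain `D`. -/
def kob {E : Type*} [NormedAddCommGroup E] [NormedSpace ℂ E] (D : Set E) (z w : E) : ℝ :=
  sInf { c | ∃ φ : ℂ → E, DifferentiableOn ℂ φ unitDisc ∧ MapsTo φ unitDisc D ∧
    ∃ ζ₁ ∈ unitDisc, ∃ ζ₂ ∈ unitDisc, φ ζ₁ = z ∧ φ ζ₂ = w ∧ c = poincareDist ζ₁ ζ₂ }

/-- A `ℂ`-proper convex domain: nonempty, open, convex, containing no complex affine line. -/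
def IsCProperConvex {E : Type*} [NormedAddCommGroup E] [NormedSpace ℂ E] (D : Set E) : Prop :=
  D.Nonempty ∧ IsOpen D ∧ Convex ℝ D ∧ ¬ ∃ z v : E, v ≠ 0 ∧ ∀ ζ : ℂ, z + ζ • v ∈ D

/-- A complex geodesic of `D`: a holomorphic isometry from the Poincaré disc into `D`. -/
def IsComplexGeodesic {E : Type*} [NormedAddCommGroup E] [NormedSpace ℂ E]
    (D : Set E) (φ : ℂ → E) : Prop :=
  DifferentiableOn ℂ φ unitDisc ∧ MapsTo φ unitDisc D ∧
    ∀ ζ₁ ∈ unitDisc, ∀ ζ₂ ∈ unitDisc, kob D (φ ζ₁) (φ ζ₂) = poincareDist ζ₁ ζ₂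

/-- `φ` has endpoint `ξ`: `φ(t) → ξ` as `t → 1⁻` along the real axis. -/
def HasEndpoint {E : Type*} [NormedAddCommGroup E] [NormedSpace ℂ E]
    (φ : ℂ → E) (ξ : E) : Prop :=
  Tendsto (fun t : ℝ => φ (t : ℂ)) (𝓝[<] (1 : ℝ)) (𝓝 ξ)

/-- The standard Hermitian product `⟨z,w⟩ = Σ_j z_j conj(w_j)` on `ℂⁿ`. -/
def herm {n : ℕ} (z w : En n) : ℂ := ∑ j, z j * (starRingEnd ℂ) (w j)

/-- The Stolz region at `σ ∈ ∂𝔻` with aperture `M`. -/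
def stolzAt (σ : ℂ) (M : ℝ) : Set ℂ :=
  {ζ ∈ unitDisc | ‖σ - ζ‖ < M * (1 - ‖ζ‖)}

/-- Non-tangential (angular) limit of `g` at `σ ∈ ∂𝔻`: limit within every Stolz region. -/
def NTLim {α : Type*} [TopologicalSpace α] (g : ℂ → α) (σ : ℂ) (a : α) : Prop :=
  ∀ M : ℝ, 1 < M → Tendsto g (𝓝[stolzAt σ M] σ) (𝓝 a)

/-- `ξ ∈ ∂D` is a point of locally finite type: near `ξ` the boundary is `C^L`-smooth
(with a `C^L` local defining function with nonvanishing differential) and the order of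
vanishing of the defining function along every complex line through a nearby boundary
point is at most `L`. -/
def IsLocallyFiniteType {n : ℕ} (D : Set (En n)) (ξ : En n) : Prop :=
  ξ ∈ frontier D ∧ ∃ L : ℕ, 2 ≤ L ∧ ∃ U : Set (En n), IsOpen U ∧ ξ ∈ U ∧
    ∃ r : En n → ℝ, ContDiffOn ℝ L r U ∧ (∀ x ∈ U, (x ∈ D ↔ r x < 0)) ∧
      (∀ x ∈ frontier D ∩ U, fderiv ℝ r x ≠ 0) ∧
      (∀ η ∈ frontier D ∩ U, ∀ v : En n, v ≠ 0 →
        ¬ (fun ζ : ℂ => r (η + ζ • v)) =o[𝓝 (0 : ℂ)] fun ζ : ℂ => ‖ζ‖ ^ L)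

/-- `nor` is the outer unit normal of the convex domain `D` at `ξ ∈ ∂D`:
a unit vector whose associated real supporting hyperplane at `ξ` keeps `D` strictly
on its negative side. -/
def IsOuterUnitNormal {n : ℕ} (D : Set (En n)) (ξ nor : En n) : Prop :=
  ‖nor‖ = 1 ∧ ∀ z ∈ D, (herm (z - ξ) nor).re < 0

/-- `Ω` is the pluricomplex Poisson kernel of `D` at `ξ` (with outer unit normal `nor`):
`Ω(z) = −1/φ'_N(1)` for any complex geodesic `φ` with `φ(0) = z` and endpoint `ξ`, where
`φ'_N(1)` is the non-tangential limit of `⟨φ'(ζ), n_ξ⟩` at `1`. -/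
def IsPoissonKernel {n : ℕ} (D : Set (En n)) (ξ nor : En n) (Ω : En n → ℝ) : Prop :=
  ∀ z ∈ D, ∀ φ : ℂ → En n, IsComplexGeodesic D φ → φ 0 = z → HasEndpoint φ ξ →
    ∀ a : ℝ, 0 < a → NTLim (fun ζ => herm (deriv φ ζ) nor) 1 (a : ℂ) → Ω z = -1 / a

/-- `h` is the horofunction of `D` with center `ξ` and base-point `p`:
`h(z) = lim_{w→ξ} [k_D(z,w) − k_D(w,p)]`. -/
def IsHorofunction {n : ℕ} (D : Set (En n)) (ξ p : En n) (h : En n → ℝ) : Prop :=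
  ∀ z ∈ D, Tendsto (fun w => kob D z w - kob D w p) (𝓝[D] ξ) (𝓝 (h z))

/-- Euclidean distance to the boundary of `D`. -/
def deltaD {E : Type*} [NormedAddCommGroup E] [NormedSpace ℂ E] (D : Set E) (z : E) : ℝ :=
  Metric.infDist z (frontier D)

open Asymptotics Complex ComplexConjugate
open scoped ComplexOrder

theorem mem_unitDisc_iff {z : ℂ} : z ∈ unitDisc ↔ ‖z‖ < 1 := mem_ball_zero_iff

theorem one_sub_sq_norm_eq_of_norm_eq_one {τ : ℂ} (hτ : ‖τ‖ = 1) (F : ℂ) :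
    1 - ‖F‖ ^ 2 = 2 * (conj τ * (τ - F)).re - ‖τ - F‖ ^ 2 := by
  have h := congrArg (· ^ 2) hτ
  simp only [Complex.sq_norm, normSq_apply, mul_re, conj_re, conj_im, sub_re, sub_im] at h ⊢
  linear_combination -h

theorem sq_norm_one_sub_conj_mul_sub_sq_norm_sub (a w : ℂ) :
    ‖1 - conj a * w‖ ^ 2 - ‖a - w‖ ^ 2 = (1 - ‖a‖ ^ 2) * (1 - ‖w‖ ^ 2) := by
  simp only [Complex.sq_norm, normSq_apply, mul_re, mul_im, conj_re, conj_im, sub_re, sub_im,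
    one_re, one_im]
  ring

theorem one_sub_conj_mul_ne_zero {a w : ℂ} (ha : ‖a‖ < 1) (hw : ‖w‖ < 1) :
    1 - conj a * w ≠ 0 := by
  refine sub_ne_zero.2 fun h => ?_
  have : ‖conj a * w‖ < 1 := by
    rw [norm_mul, norm_conj]
    exact mul_lt_one_of_nonneg_of_lt_one_left (norm_nonneg a) ha hw.le
  rw [← h, norm_one] at this
  exact lt_irrefl _ this

theorem norm_sub_div_one_sub_conj_mul_lt_one {a w : ℂ} (ha : ‖a‖ < 1) (hw : ‖w‖ < 1) :
    ‖(a - w) / (1 - conj a * w)‖ < 1 := by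
  rw [norm_div, div_lt_one (norm_pos_iff.2 (one_sub_conj_mul_ne_zero ha hw))]
  have key := sq_norm_one_sub_conj_mul_sub_sq_norm_sub a w
  have : 0 < (1 - ‖a‖ ^ 2) * (1 - ‖w‖ ^ 2) := by
    apply mul_pos <;> nlinarith [norm_nonneg a, norm_nonneg w]
  nlinarith [norm_nonneg (a - w), norm_nonneg (1 - conj a * w)]

theorem nonneg_of_forall_re_mul_nonneg {c : ℂ} (h : ∀ v : ℂ, 0 < v.re → 0 ≤ (c * v).re) :
    0 ≤ c := by
  refine Complex.nonneg_iff.2 ⟨by simpa using h 1 one_pos, ?_⟩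
  by_contra hc
  have := h ⟨1, (c.re + 1) / c.im⟩ one_pos
  rw [mul_re, mul_div_cancel₀ _ (Ne.symm hc)] at this
  linarith

theorem mul_one_sub_sq_norm_le_of_mapsTo {f : ℂ → ℂ} (hf : DifferentiableOn ℂ f unitDisc)
    (hfm : MapsTo f unitDisc unitDisc) {z : ℂ} (hz : z ∈ unitDisc) :
    (1 - ‖f 0‖) / (1 + ‖f 0‖) * (1 - ‖z‖ ^ 2) ≤ 1 - ‖f z‖ ^ 2 := by
  set a := f 0
  have ha : ‖a‖ < 1 := mem_unitDisc_iff.1 (hfm (mem_ball_self one_pos))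
  have hden : ∀ w ∈ unitDisc, 1 - conj a * f w ≠ 0 := fun w hw =>
    one_sub_conj_mul_ne_zero ha (mem_unitDisc_iff.1 (hfm hw))
  -- the disc automorphism exchanging `a` and `0`, composed with `f`, fixes the origin
  set g : ℂ → ℂ := fun w => (a - f w) / (1 - conj a * f w)
  have hg : DifferentiableOn ℂ g unitDisc :=
    ((differentiableOn_const a).sub hf).div ((differentiableOn_const 1).sub
      ((differentiableOn_const _).mul hf)) hden
  have hgm : MapsTo g unitDisc (closedBall 0 1) := fun w hw =>
    mem_closedBall_zero_iff.2 (norm_sub_div_one_sub_conj_mul_lt_one ha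
      (mem_unitDisc_iff.1 (hfm hw))).le
  have hschwarz : ‖g z‖ ≤ ‖z‖ :=
    Complex.norm_le_norm_of_mapsTo_ball hg hgm (by simp [g, a]) (mem_unitDisc_iff.1 hz)
  have hF : ‖f z‖ < 1 := mem_unitDisc_iff.1 (hfm hz)
  have hD : 0 < ‖1 - conj a * f z‖ := norm_pos_iff.2 (hden z hz)
  have hnum : ‖a - f z‖ ≤ ‖z‖ * ‖1 - conj a * f z‖ := by
    rwa [norm_div, div_le_iff₀ hD] at hschwarz
  have hlow : 1 - ‖a‖ ≤ ‖1 - conj a * f z‖ := by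
    have := norm_sub_norm_le (1 : ℂ) (conj a * f z)
    rw [norm_one, norm_mul, norm_conj] at this
    nlinarith [norm_nonneg a, norm_nonneg (f z)]
  have hz1 : ‖z‖ < 1 := mem_unitDisc_iff.1 hz
  have hprod : (1 - ‖a‖) ^ 2 * (1 - ‖z‖ ^ 2) ≤ (1 - ‖a‖ ^ 2) * (1 - ‖f z‖ ^ 2) := by
    rw [← sq_norm_one_sub_conj_mul_sub_sq_norm_sub]
    have h1 : 0 ≤ 1 - ‖z‖ ^ 2 := by nlinarith [norm_nonneg z]
    nlinarith [mul_le_mul hnum hnum (norm_nonneg _) (by positivity),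
      mul_le_mul_of_nonneg_right (pow_le_pow_left₀ (by linarith) hlow 2) h1]
  rw [div_mul_eq_mul_div, div_le_iff₀ (by positivity)]
  have ha1 : 0 < 1 - ‖a‖ := by linarith
  nlinarith

theorem ne_of_mem_stolzAt {σ ζ : ℂ} {M : ℝ} (hσ : ‖σ‖ = 1) (hζ : ζ ∈ stolzAt σ M) : ζ ≠ σ := by
  rintro rfl
  exact (mem_unitDisc_iff.1 hζ.1).ne hσ

theorem norm_sub_le_mul_one_sub_sq_norm_of_mem_stolzAt {σ ζ : ℂ} {M : ℝ} (hζ : ζ ∈ stolzAt σ M) :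
    ‖σ - ζ‖ ≤ M * (1 - ‖ζ‖ ^ 2) := by
  obtain ⟨hζD, hζM⟩ := hζ
  have hζ1 := mem_unitDisc_iff.1 hζD
  have hM : 0 < M := pos_of_mul_pos_left ((norm_nonneg _).trans_lt hζM) (by linarith)
  have : 1 - ‖ζ‖ ≤ 1 - ‖ζ‖ ^ 2 := by nlinarith [norm_nonneg ζ]
  nlinarith

theorem sq_norm_one_sub_mul (t : ℝ) (v : ℂ) :
    ‖1 - t * v‖ ^ 2 = 1 - t * (2 * v.re - t * ‖v‖ ^ 2) := by
  simp only [Complex.sq_norm, normSq_apply, sub_re, sub_im, mul_re, mul_im, one_re, one_im,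
    ofReal_re, ofReal_im]
  ring

theorem exists_tendsto_stolzAt_of_re_pos {σ v : ℂ} (hσ : ‖σ‖ = 1) (hv : 0 < v.re) :
    ∃ M, 1 < M ∧ Tendsto (fun t : ℝ => σ * (1 - t * v)) (𝓝[>] 0) (𝓝[stolzAt σ M] σ) := by
  have hv0 : 0 < ‖v‖ := norm_pos_iff.2 fun h => by simp [h] at hv
  have hre : v.re ≤ ‖v‖ := re_le_norm v
  refine ⟨2 * ‖v‖ / v.re, by rw [lt_div_iff₀ hv]; linarith, tendsto_nhdsWithin_iff.2 ⟨?_, ?_⟩⟩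
  · refine ((continuous_const.mul (continuous_const.sub
      (continuous_ofReal.mul continuous_const))).tendsto' 0 σ (by simp)).mono_left
      nhdsWithin_le_nhds
  · have hpos : 0 < v.re / ‖v‖ ^ 2 := by positivity
    filter_upwards [Ioo_mem_nhdsGT hpos] with t ⟨ht0, ht⟩
    rw [lt_div_iff₀ (by positivity)] at ht
    have hs2 : ‖σ * (1 - t * v)‖ ^ 2 < 1 - t * v.re := by
      rw [norm_mul, hσ, one_mul, sq_norm_one_sub_mul]
      nlinarith
    have hs : ‖σ * (1 - t * v)‖ < 1 := by nlinarith [norm_nonneg (σ * (1 - t * v))]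
    refine ⟨mem_unitDisc_iff.2 hs, ?_⟩
    have hdist : ‖σ - σ * (1 - t * v)‖ = t * ‖v‖ := by
      rw [show σ - σ * (1 - t * v) = t * (σ * v) by ring, norm_mul, norm_mul, hσ, one_mul,
        norm_real, Real.norm_of_nonneg ht0.le]
    have h1s : t * v.re < 2 * (1 - ‖σ * (1 - t * v)‖) := by
      nlinarith [norm_nonneg (σ * (1 - t * v))]
    rw [hdist, div_mul_eq_mul_div, lt_div_iff₀ hv]
    nlinarith

theorem isLittleO_one_sub_sq_norm_sub {l : Filter ℂ} {f : ℂ → ℂ} {σ τ d : ℂ} (hτ : ‖τ‖ = 1)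
    (hσ : Tendsto (fun ζ => σ - ζ) l (𝓝 0)) (hne : ∀ᶠ ζ in l, ζ ≠ σ)
    (hd : Tendsto (fun ζ => (τ - f ζ) / (σ - ζ)) l (𝓝 d)) :
    (fun ζ => 1 - ‖f ζ‖ ^ 2 - 2 * (conj τ * d * (σ - ζ)).re) =o[l] fun ζ => σ - ζ := by
  set q := fun ζ => (τ - f ζ) / (σ - ζ)
  have hbound : ∀ᶠ ζ in l, ‖1 - ‖f ζ‖ ^ 2 - 2 * (conj τ * d * (σ - ζ)).re‖ ≤
      (2 * ‖q ζ - d‖ + ‖q ζ‖ ^ 2 * ‖σ - ζ‖) * ‖σ - ζ‖ := by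
    filter_upwards [hne] with ζ hζ
    have hq : τ - f ζ = q ζ * (σ - ζ) := (div_mul_cancel₀ _ (sub_ne_zero.2 hζ.symm)).symm
    have hre : |(conj τ * ((q ζ - d) * (σ - ζ))).re| ≤ ‖q ζ - d‖ * ‖σ - ζ‖ := by
      simpa [hτ] using abs_re_le_norm (conj τ * ((q ζ - d) * (σ - ζ)))
    rw [one_sub_sq_norm_eq_of_norm_eq_one hτ, hq, norm_mul, Real.norm_eq_abs]
    calc |2 * (conj τ * (q ζ * (σ - ζ))).re - (‖q ζ‖ * ‖σ - ζ‖) ^ 2 -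
          2 * (conj τ * d * (σ - ζ)).re|
        = |2 * (conj τ * ((q ζ - d) * (σ - ζ))).re - ‖q ζ‖ ^ 2 * ‖σ - ζ‖ * ‖σ - ζ‖| := by
          congr 1; simp only [mul_re, sub_re, sub_im, mul_im]; ring
      _ ≤ _ := by
          have hx : 0 ≤ ‖q ζ‖ ^ 2 * ‖σ - ζ‖ * ‖σ - ζ‖ := by positivity
          rw [abs_le]; constructor <;> linarith [abs_le.1 hre]
  have he : Tendsto (fun ζ => 2 * ‖q ζ - d‖ + ‖q ζ‖ ^ 2 * ‖σ - ζ‖) l (𝓝 0) := by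
    simpa using ((hd.sub_const d).norm.const_mul 2).add ((hd.norm.pow 2).mul hσ.norm)
  refine isLittleO_iff.2 fun c hc => ?_
  filter_upwards [hbound, he.eventually (gt_mem_nhds hc)] with ζ h1 h2
  exact h1.trans (mul_le_mul_of_nonneg_right h2.le (norm_nonneg _))

theorem isLittleO_one_sub_sq_norm_sub_stolzAt {f : ℂ → ℂ} {σ τ d : ℂ} {M : ℝ} (hσ : ‖σ‖ = 1)
    (hτ : ‖τ‖ = 1) (hd : Tendsto (fun ζ => (τ - f ζ) / (σ - ζ)) (𝓝[stolzAt σ M] σ) (𝓝 d)) :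
    (fun ζ => 1 - ‖f ζ‖ ^ 2 - 2 * (conj τ * d * (σ - ζ)).re) =o[𝓝[stolzAt σ M] σ]
      fun ζ => σ - ζ :=
  isLittleO_one_sub_sq_norm_sub hτ
    ((sub_self σ ▸ tendsto_id.const_sub σ).mono_left nhdsWithin_le_nhds)
    (eventually_nhdsWithin_of_forall fun _ hζ => ne_of_mem_stolzAt hσ hζ) hd

theorem re_mul_nonneg_of_le_one_sub_sq_norm {f : ℂ → ℂ} {σ τ d v : ℂ} {κ : ℝ} (hσ : ‖σ‖ = 1)
    (hτ : ‖τ‖ = 1) (hd : NTLim (fun ζ => (τ - f ζ) / (σ - ζ)) σ d)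
    (hκ : ∀ z ∈ unitDisc, κ * (1 - ‖z‖ ^ 2) ≤ 1 - ‖f z‖ ^ 2) (hv : 0 < v.re) :
    0 ≤ ((conj τ * σ * d - κ) * v).re := by
  obtain ⟨M, hM, hray⟩ := exists_tendsto_stolzAt_of_re_pos hσ hv
  set r : ℝ → ℂ := fun t => σ * (1 - t * v)
  set A : ℂ → ℝ := fun ζ => 1 - ‖f ζ‖ ^ 2 - 2 * (conj τ * d * (σ - ζ)).re
  have hsub : ∀ t : ℝ, σ - r t = t * (σ * v) := fun t => by simp only [r]; ring
  have hAr : (fun t => A (r t)) =o[𝓝[>] 0] fun t : ℝ => t := by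
    refine ((isLittleO_one_sub_sq_norm_sub_stolzAt hσ hτ (hd M hM)).comp_tendsto hray).trans_isBigO
      (IsBigO.of_bound ‖v‖ (Eventually.of_forall fun t => ?_))
    simp [hsub, hσ, mul_comm]
  have hle : ∀ᶠ t in 𝓝[>] 0, κ * (2 * v.re - t * ‖v‖ ^ 2) ≤
      A (r t) / t + 2 * (conj τ * d * (σ * v)).re := by
    filter_upwards [self_mem_nhdsWithin, hray.eventually self_mem_nhdsWithin] with t ht hrt
    have h := hκ (r t) hrt.1
    rw [show ‖r t‖ = ‖1 - t * v‖ by simp [r, hσ], sq_norm_one_sub_mul] at h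
    have hA : 1 - ‖f (r t)‖ ^ 2 = A (r t) + t * (2 * (conj τ * d * (σ * v)).re) := by
      simp only [A, hsub, show conj τ * d * (t * (σ * v)) = t * (conj τ * d * (σ * v)) by ring,
        re_ofReal_mul]
      ring
    rw [hA] at h
    rw [div_add' _ _ _ ht.ne', le_div_iff₀ ht]
    linarith
  have ht : Tendsto (fun t : ℝ => t) (𝓝[>] 0) (𝓝 0) := nhdsWithin_le_nhds
  have hlim := le_of_tendsto_of_tendsto
    (((ht.mul_const (‖v‖ ^ 2)).const_sub (2 * v.re)).const_mul κ)
    (hAr.tendsto_div_nhds_zero.add_const _) hle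
  rw [sub_mul, sub_re, re_ofReal_mul, show conj τ * σ * d * v = conj τ * d * (σ * v) by ring]
  simp only [zero_mul, sub_zero, zero_add] at hlim
  linarith

theorem tendsto_one_sub_sq_norm_div_stolzAt {f : ℂ → ℂ} {σ τ d : ℂ} {M ℓ : ℝ} (hσ : ‖σ‖ = 1)
    (hτ : ‖τ‖ = 1) (hd : Tendsto (fun ζ => (τ - f ζ) / (σ - ζ)) (𝓝[stolzAt σ M] σ) (𝓝 d))
    (hℓ : conj τ * σ * d = ℓ) :
    Tendsto (fun ζ => (1 - ‖f ζ‖ ^ 2) / (1 - ‖ζ‖ ^ 2)) (𝓝[stolzAt σ M] σ) (𝓝 ℓ) := by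
  have hstolz : ∀ᶠ ζ in 𝓝[stolzAt σ M] σ, ζ ∈ stolzAt σ M := self_mem_nhdsWithin
  have hid : Tendsto (fun ζ => (σ - ζ) / (σ - ζ)) (𝓝[stolzAt σ M] σ) (𝓝 1) :=
    tendsto_const_nhds.congr' (hstolz.mono fun ζ hζ =>
      (div_self (sub_ne_zero.2 (ne_of_mem_stolzAt hσ hζ).symm)).symm)
  have hσσ : conj σ * σ = 1 := by
    rw [mul_comm, mul_conj, normSq_eq_norm_sq, hσ, one_pow, ofReal_one]
  have hτd : conj τ * d = ℓ * conj σ := by linear_combination (conj σ) * hℓ - conj τ * d * hσσ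
  -- the first-order terms of the expansions of `1 - ‖f ζ‖ ^ 2` and `ℓ * (1 - ‖ζ‖ ^ 2)` cancel
  have hN : (fun ζ => 1 - ‖f ζ‖ ^ 2 - ℓ * (1 - ‖ζ‖ ^ 2)) =o[𝓝[stolzAt σ M] σ] fun ζ => σ - ζ := by
    have hF := isLittleO_one_sub_sq_norm_sub_stolzAt hσ hτ hd
    have hZ := isLittleO_one_sub_sq_norm_sub_stolzAt (f := fun ζ => ζ) hσ hσ hid
    refine (hF.sub (hZ.const_mul_left ℓ)).congr_left fun ζ => ?_
    rw [hτd, mul_one, mul_assoc, re_ofReal_mul]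
    ring
  have hB : (fun ζ => σ - ζ) =O[𝓝[stolzAt σ M] σ] fun ζ => 1 - ‖ζ‖ ^ 2 := by
    refine IsBigO.of_bound M (hstolz.mono fun ζ hζ => ?_)
    rw [Real.norm_of_nonneg (by nlinarith [mem_unitDisc_iff.1 hζ.1, norm_nonneg ζ])]
    exact norm_sub_le_mul_one_sub_sq_norm_of_mem_stolzAt hζ
  have hlim := (hN.trans_isBigO hB).tendsto_div_nhds_zero.const_add ℓ
  rw [add_zero] at hlim
  refine hlim.congr' (hstolz.mono fun ζ hζ => ?_)
  have hD : 1 - ‖ζ‖ ^ 2 ≠ 0 := by nlinarith [mem_unitDisc_iff.1 hζ.1, norm_nonneg ζ]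
  field_simp
  ring

theorem zero_lt_conj_mul_mul_of_ntLim {f : ℂ → ℂ} {σ τ d : ℂ}
    (hf : DifferentiableOn ℂ f unitDisc) (hfm : MapsTo f unitDisc unitDisc) (hσ : ‖σ‖ = 1)
    (hτ : ‖τ‖ = 1) (hd : NTLim (fun ζ => (τ - f ζ) / (σ - ζ)) σ d) :
    0 < conj τ * σ * d := by
  have hκ : 0 < (1 - ‖f 0‖) / (1 + ‖f 0‖) := by
    have := mem_unitDisc_iff.1 (hfm (mem_ball_self one_pos))
    exact div_pos (by linarith) (by positivity)
  have hc : (((1 - ‖f 0‖) / (1 + ‖f 0‖) : ℝ) : ℂ) ≤ conj τ * σ * d :=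
    sub_nonneg.1 <| nonneg_of_forall_re_mul_nonneg fun v hv =>
      re_mul_nonneg_of_le_one_sub_sq_norm hσ hτ hd
        (fun _ hz => mul_one_sub_sq_norm_le_of_mapsTo hf hfm hz) hv
  exact (zero_lt_real.2 hκ).trans_le hc

theorem stmt9_general (f : ℂ → ℂ) (hf : DifferentiableOn ℂ f unitDisc)
    (hfm : MapsTo f unitDisc unitDisc)
    (σ τ : ℂ) (hσ : ‖σ‖ = 1) (hτ : ‖τ‖ = 1)
    (d : ℂ) (hd : NTLim (fun ζ => (τ - f ζ) / (σ - ζ)) σ d) :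
    NTLim (fun ζ =>
        (-(1 - ‖ζ‖ ^ 2) / ‖σ - ζ‖ ^ 2) /
        (-(1 - ‖f ζ‖ ^ 2) / ‖τ - f ζ‖ ^ 2))
      σ (‖d‖) := by
  have hc0 := zero_lt_conj_mul_mul_of_ntLim hf hfm hσ hτ hd
  have hcd : conj τ * σ * d = ‖d‖ := by
    rw [← norm_of_nonneg' hc0.le]; simp [hσ, hτ]
  have hd0 : ‖d‖ ≠ 0 := by
    rintro h; rw [h, ofReal_zero] at hcd; exact hc0.ne' hcd
  intro M hM
  have hlim := ((hd M hM).norm.pow 2).div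
    (tendsto_one_sub_sq_norm_div_stolzAt hσ hτ (hd M hM) hcd) hd0
  rw [sq, mul_div_cancel_right₀ _ hd0] at hlim
  refine hlim.congr fun ζ => ?_
  simp only [Pi.div_apply, norm_div]
  field_simp

/-- if `f : 𝔻 → 𝔻` is holomorphic with finite angular derivative `d` at
`σ ∈ ∂𝔻` and non-tangential limit `τ = f(σ) ∈ ∂𝔻`, then
`∠lim_{ζ→σ} Ω^𝔻_σ(ζ)/Ω^𝔻_τ(f(ζ)) = |f'(σ)|`, where `Ω^𝔻_τ(ζ) = −(1−|ζ|²)/|τ−ζ|²`. -/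
theorem stmt9 (f : ℂ → ℂ) (hf : DifferentiableOn ℂ f unitDisc)
    (hfm : MapsTo f unitDisc unitDisc)
    (σ τ : ℂ) (hσ : ‖σ‖ = 1) (hτ : ‖τ‖ = 1)
    (hlim : NTLim f σ τ)
    (d : ℂ) (hd : NTLim (fun ζ => (τ - f ζ) / (σ - ζ)) σ d) :
    NTLim (fun ζ =>
        (-(1 - ‖ζ‖ ^ 2) / ‖σ - ζ‖ ^ 2) /
        (-(1 - ‖f ζ‖ ^ 2) / ‖τ - f ζ‖ ^ 2))
      σ (‖d‖) :=
  stmt9_general f hf hfm σ τ hσ hτ d hd
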